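/- Every proper 3-coloring of an odd cycle C_n admits a colorful vertex, i.e., a vertex v_i with |{c(v_{i-1}), c(v_i), c(v_{i+1})}| = 3. -/

import Mathlib

open SimpleGraph Finset

/-- A proper `k`-coloring of a simple graph: adjacent vertices get distinct colors. -/
def properColoring {V : Type*} (G : SimpleGraph V) (k : ℕ) (c : V → Fin k) : Prop :=
  ∀ ⦃v w : V⦄, G.Adj v w → c v ≠ c w

/-- `S` is a determining set for `(G, c)`: `c` is the unique proper `k`-coloring
agreeing with `c` on `S`. -/
def Determining {V : Type*} (G : SimpleGraph V) {k : ℕ} (c : V → Fin k) (S : Finset V) : Prop :=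
  ∀ c' : V → Fin k, properColoring G k c' → (∀ v ∈ S, c' v = c v) → c' = c

/-- A critical set: an inclusion-minimal determining set. -/
def CriticalSet {V : Type*} (G : SimpleGraph V) {k : ℕ} (c : V → Fin k) (S : Finset V) : Prop :=
  Determining G c S ∧ ∀ T : Finset V, T ⊂ S → ¬ Determining G c T

/-- The cycle graph on `Fin n`, with `i` adjacent to `i ± 1` (mod `n`). -/
def cycGraph (n : ℕ) [NeZero n] : SimpleGraph (Fin n) :=
  SimpleGraph.fromRel (fun i j => i + 1 = j)

/-- A vertex is colorful if every color appears on its closed neighborhood. -/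
def Colorful {V : Type*} (G : SimpleGraph V) {k : ℕ} (c : V → Fin k) (v : V) : Prop :=
  ∀ a : Fin k, ∃ w : V, (w = v ∨ G.Adj v w) ∧ c w = a

/-- `G` is uniquely `k`-colorable: any two proper `k`-colorings differ by a permutation
of the colors. -/
def UniquelyColorable {V : Type*} (G : SimpleGraph V) (k : ℕ) : Prop :=
  ∀ c c' : V → Fin k, properColoring G k c → properColoring G k c' →
    ∃ π : Equiv.Perm (Fin k), c' = π ∘ c

/-! If no vertex is colorful, properness forces `c (i - 1) = c (i + 1)` for every `i`, so `c` is
2-periodic on `ℤ/n`. Since `n` is odd, `2` generates `ℤ/n`, hence `c` would be 1-periodic, i.e.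
constant, contradicting properness. -/

theorem Fin.one_add_one_eq_two {n : ℕ} [NeZero n] : (1 + 1 : Fin n) = 2 := by
  ext
  simp [Fin.val_add]

theorem Fin.nsmul_two_eq_one_of_odd {n : ℕ} [NeZero n] (hn : Odd n) :
    ((n + 1) / 2) • (2 : Fin n) = 1 := by
  have hdiv : 2 * ((n + 1) / 2) = n + 1 := Nat.mul_div_cancel' hn.add_one.two_dvd
  have hcard : n • (1 : Fin n) = 0 := by
    simpa using card_nsmul_eq_zero (G := Fin n) (x := 1)
  rw [← Fin.one_add_one_eq_two, ← two_nsmul, ← mul_nsmul, hdiv, succ_nsmul, hcard, zero_add]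

theorem Function.Periodic.periodic_one_of_odd {α : Type*} {n : ℕ} [NeZero n] (hn : Odd n)
    {f : Fin n → α} (hf : Function.Periodic f 2) : Function.Periodic f 1 := by
  simpa only [Fin.nsmul_two_eq_one_of_odd hn] using hf.nsmul ((n + 1) / 2)

theorem cycGraph_adj_add_one {n : ℕ} [NeZero n] (hn : n ≠ 1) (i : Fin n) :
    (cycGraph n).Adj i (i + 1) := by
  refine ⟨?_, Or.inl rfl⟩
  simpa [Fin.ext_iff, Fin.val_add, Fin.val_one'] using hn

theorem Fin.exists_pred_ne_succ_of_odd {α : Type*} {n : ℕ} [NeZero n] (hn : Odd n)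
    {c : Fin n → α} (hc : ∀ i, c i ≠ c (i + 1)) : ∃ i, c (i - 1) ≠ c (i + 1) := by
  by_contra! h
  have h2 : Function.Periodic c 2 := fun i => by
    simpa [add_assoc, Fin.one_add_one_eq_two] using (h (i + 1)).symm
  exact hc 0 (h2.periodic_one_of_odd hn 0).symm

theorem stmt9 (n : ℕ) [NeZero n] (hn : Odd n) (h3 : 3 ≤ n)
    (c : Fin n → Fin 3) (hc : properColoring (cycGraph n) 3 c) :
    ∃ i : Fin n, c (i - 1) ≠ c i ∧ c i ≠ c (i + 1) ∧ c (i - 1) ≠ c (i + 1) := by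
  have hstep : ∀ i : Fin n, c i ≠ c (i + 1) := fun i => hc (cycGraph_adj_add_one (by omega) i)
  obtain ⟨i, hi⟩ := Fin.exists_pred_ne_succ_of_odd hn hstep
  refine ⟨i, ?_, hstep i, hi⟩
  simpa using hstep (i - 1)
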